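/- If q : [0,1] → ℝ is convex, then for every n ≥ 2 the α-Bernstein operator value B_n^α(q; z) = ∑_{i=0}^{n} F_{n,i}(z) q(i/n) is a convex function of z on [0,1]. -/

import Mathlib

open Finset


noncomputable def bb : ℕ → ℤ → ℝ → ℝ
  | 0, i, _ => if i = 0 then 1 else 0
  | m + 1, i, z => (1 - z) * bb m i z + z * bb m (i - 1) z

lemma bb_zero (i : ℤ) (z : ℝ) : bb 0 i z = if i = 0 then 1 else 0 := rfl

lemma bb_succ (m : ℕ) (i : ℤ) (z : ℝ) :
    bb (m + 1) i z = (1 - z) * bb m i z + z * bb m (i - 1) z := rfl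

lemma bb_neg : ∀ (m : ℕ) (i : ℤ), i < 0 → ∀ z : ℝ, bb m i z = 0
  | 0, i, hi, z => by rw [bb_zero, if_neg (by omega)]
  | m + 1, i, hi, z => by
      rw [bb_succ, bb_neg m i hi, bb_neg m (i - 1) (by omega)]; ring

lemma bb_gt : ∀ (m : ℕ) (i : ℤ), (m : ℤ) < i → ∀ z : ℝ, bb m i z = 0
  | 0, i, hi, z => by rw [bb_zero, if_neg (by omega)]
  | m + 1, i, hi, z => by
      rw [bb_succ, bb_gt m i (by push_cast at hi ⊢; omega),
        bb_gt m (i - 1) (by push_cast at hi ⊢; omega)]; ring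

lemma bb_nonneg : ∀ (m : ℕ) (i : ℤ) (z : ℝ), 0 ≤ z → z ≤ 1 → 0 ≤ bb m i z
  | 0, i, z, _, _ => by rw [bb_zero]; split <;> norm_num
  | m + 1, i, z, h0, h1 => by
      rw [bb_succ]
      have a1 := bb_nonneg m i z h0 h1
      have a2 := bb_nonneg m (i - 1) z h0 h1
      have : (0:ℝ) ≤ 1 - z := by linarith
      positivity

lemma hasDerivAt_bb : ∀ (m : ℕ) (i : ℤ) (z : ℝ),
    HasDerivAt (fun z => bb (m + 1) i z) (((m : ℝ) + 1) * (bb m (i - 1) z - bb m i z)) z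
  | 0, i, z => by
      have h : (fun z : ℝ => bb 1 i z)
          = fun z : ℝ => (1 - z) * bb 0 i 0 + z * bb 0 (i - 1) 0 := by
        funext w; rw [bb_succ, bb_zero, bb_zero, bb_zero, bb_zero]
      rw [h]
      have h1 := (((hasDerivAt_id z).const_sub 1).mul_const (bb 0 i 0)).add
        ((hasDerivAt_id z).mul_const (bb 0 (i - 1) 0))
      convert h1 using 1
      case e'_4 => rfl
      case e'_5 => rfl
      case e'_8 => rfl
      rw [bb_zero, bb_zero, bb_zero, bb_zero]
      push_cast; ring
  | m + 1, i, z => by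
      have h : (fun z : ℝ => bb (m + 2) i z)
          = fun z : ℝ => (1 - z) * bb (m + 1) i z + z * bb (m + 1) (i - 1) z := by
        funext w; rw [bb_succ]
      rw [h]
      have h1 := (((hasDerivAt_id z).const_sub 1).mul (hasDerivAt_bb m i z)).add
        ((hasDerivAt_id z).mul (hasDerivAt_bb m (i - 1) z))
      convert h1 using 1
      case e'_4 => rfl
      case e'_5 => rfl
      case e'_8 => rfl
      rw [bb_succ m (i-1) z, bb_succ m i z, show i - 1 - 1 = i - 2 by ring]
      simp only [id_eq]
      push_cast; ring

noncomputable def S (m : ℕ) (c : ℤ → ℝ) (z : ℝ) : ℝ :=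
  ∑ i ∈ Finset.range (m + 1), bb m (i : ℤ) z * c i

def Dc (c : ℤ → ℝ) (i : ℤ) : ℝ := c (i + 1) - c i

lemma Dc_Dc (c : ℤ → ℝ) (j : ℤ) : Dc (Dc c) j = c (j + 2) - 2 * c (j + 1) + c j := by
  simp only [Dc, show j + 1 + 1 = j + 2 by ring]; ring

lemma S_nonneg (m : ℕ) (c : ℤ → ℝ) (z : ℝ) (h0 : 0 ≤ z) (h1 : z ≤ 1)
    (hc : ∀ i : ℕ, i ≤ m → 0 ≤ c i) : 0 ≤ S m c z := by
  refine Finset.sum_nonneg fun i hi => mul_nonneg (bb_nonneg _ _ _ h0 h1) ?_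
  exact hc i (by simpa [Nat.lt_succ_iff] using hi)

lemma S_sub (m : ℕ) (c d : ℤ → ℝ) (z : ℝ) :
    S m c z - S m d z = ∑ i ∈ Finset.range (m + 1), bb m (i : ℤ) z * (c i - d i) := by
  simp only [S, mul_sub, Finset.sum_sub_distrib]

lemma hasDerivAt_S (m : ℕ) (c : ℤ → ℝ) (z : ℝ) :
    HasDerivAt (fun z => S m c z) ((m : ℝ) * S (m - 1) (Dc c) z) z := by
  cases m with
  | zero =>
      have h : (fun z : ℝ => S 0 c z) = fun _ => c 0 := by
        funext w; simp [S, bb_zero]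
      rw [h]
      simpa using hasDerivAt_const z (c 0)
  | succ m =>
      have h : HasDerivAt (fun z => S (m + 1) c z)
          (∑ i ∈ Finset.range (m + 2),
            (((m : ℝ) + 1) * (bb m ((i : ℤ) - 1) z - bb m (i : ℤ) z)) * c i) z := by
        apply HasDerivAt.fun_sum
        intro i _
        exact (hasDerivAt_bb m i z).mul_const (c i)
      convert h using 1
      have e1 : ∑ i ∈ Finset.range (m + 2), bb m ((i : ℤ) - 1) z * c i
          = ∑ i ∈ Finset.range (m + 1), bb m (i : ℤ) z * c ((i : ℤ) + 1) := by
        rw [Finset.sum_range_succ']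
        have h0 : bb m ((0 : ℕ) - 1 : ℤ) z = 0 := bb_neg m _ (by norm_num) z
        push_cast at h0 ⊢
        rw [h0]
        simp only [zero_mul, add_zero]
        exact Finset.sum_congr rfl fun i _ => by norm_num
      have e2 : ∑ i ∈ Finset.range (m + 2), bb m (i : ℤ) z * c i
          = ∑ i ∈ Finset.range (m + 1), bb m (i : ℤ) z * c i := by
        rw [Finset.sum_range_succ, bb_gt m ((m + 1 : ℕ) : ℤ) (by push_cast; omega) z]
        simp
      have e3 : ∑ i ∈ Finset.range (m + 2),
            (((m : ℝ) + 1) * (bb m ((i : ℤ) - 1) z - bb m (i : ℤ) z)) * c i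
          = ((m : ℝ) + 1) * (∑ i ∈ Finset.range (m + 2), bb m ((i : ℤ) - 1) z * c i
            - ∑ i ∈ Finset.range (m + 2), bb m (i : ℤ) z * c i) := by
        rw [← Finset.sum_sub_distrib, Finset.mul_sum]
        exact Finset.sum_congr rfl fun i _ => by ring
      rw [e3, e1, e2, ← Finset.sum_sub_distrib, Finset.mul_sum]
      simp only [S, Nat.add_sub_cancel, Dc]
      rw [Finset.mul_sum]
      exact Finset.sum_congr rfl fun i _ => by push_cast; ring


/-- The recursively defined α-Bernstein polynomials: starting basis at order 2,
extended by the de Casteljau-type recursion, zero outside `0 ≤ i ≤ n`. -/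
noncomputable def F (α : ℝ) : ℕ → ℤ → ℝ → ℝ
  | 2, i, z =>
      if i = 0 then 1 - z + α * (z ^ 2 - z)
      else if i = 1 then -2 * α * (z ^ 2 - z)
      else if i = 2 then z + α * (z ^ 2 - z) else 0
  | n + 3, i, z => (1 - z) * F α (n + 2) i z + z * F α (n + 2) (i - 1) z
  | _, _, _ => 0

lemma F_two (α : ℝ) (i : ℤ) (z : ℝ) :
    F α 2 i z = if i = 0 then 1 - z + α * (z ^ 2 - z)
      else if i = 1 then -2 * α * (z ^ 2 - z)
      else if i = 2 then z + α * (z ^ 2 - z) else 0 := rfl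

lemma F_succ (α : ℝ) (m : ℕ) (i : ℤ) (z : ℝ) :
    F α (m + 3) i z = (1 - z) * F α (m + 2) i z + z * F α (m + 2) (i - 1) z := rfl

lemma F_eq (α : ℝ) : ∀ (m : ℕ) (i : ℤ) (z : ℝ),
    F α (m + 2) i z
      = α * bb (m + 2) i z + (1 - α) * ((1 - z) * bb m i z + z * bb m (i - 2) z)
  | 0, i, z => by
      rw [F_two]
      by_cases h0 : i = 0
      · subst h0
        rw [if_pos rfl]
        simp only [bb_succ, bb_zero]
        norm_num; ring
      · rw [if_neg h0]
        by_cases h1 : i = 1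
        · subst h1
          rw [if_pos rfl]
          simp only [bb_succ, bb_zero]
          norm_num; ring
        · rw [if_neg h1]
          by_cases h2 : i = 2
          · subst h2
            rw [if_pos rfl]
            simp only [bb_succ, bb_zero]
            norm_num; ring
          · rw [if_neg h2]
            by_cases hneg : i < 0
            · rw [bb_neg 2 i hneg z, bb_neg 0 i hneg z, bb_neg 0 (i - 2) (by omega) z]
              ring
            · rw [bb_gt 2 i (by push_cast; omega) z, bb_gt 0 i (by push_cast; omega) z,
                bb_gt 0 (i - 2) (by push_cast; omega) z]
              ring
  | m + 1, i, z => by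
      rw [F_succ, F_eq α m i z, F_eq α m (i - 1) z]
      rw [show m + 1 + 2 = (m + 2) + 1 from rfl, bb_succ (m + 2) i z,
        bb_succ m i z, bb_succ m (i - 2) z,
        show i - 1 - 2 = i - 2 - 1 by ring]
      ring

lemma Dc_Dc_shift (c : ℤ → ℝ) (j : ℤ) :
    Dc (Dc fun i => c (i + 2)) j = Dc (Dc c) (j + 2) := by
  rw [Dc_Dc, Dc_Dc, show j + 1 + 2 = j + 2 + 1 by ring]

lemma Dc_sub (c : ℤ → ℝ) (i : ℤ) :
    Dc (fun j => c (j + 2)) i - Dc c i = Dc (Dc c) i + Dc (Dc c) (i + 1) := by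
  simp only [Dc]
  rw [show i + 1 + 2 = i + 3 by ring, show i + 1 + 1 + 1 = i + 3 by ring,
    show i + 1 + 1 = i + 2 by ring]
  ring

theorem alphaBernstein_operator_convex (α : ℝ) (hα : α ∈ Set.Icc (0 : ℝ) 1)
    (n : ℕ) (hn : 2 ≤ n) (q : ℝ → ℝ) (hq : ConvexOn ℝ (Set.Icc 0 1) q) :
    ConvexOn ℝ (Set.Icc 0 1)
      (fun z : ℝ => ∑ i ∈ Finset.range (n + 1), F α n (i : ℤ) z * q ((i : ℝ) / n)) := by
  obtain ⟨m, rfl⟩ : ∃ m, n = m + 2 := ⟨n - 2, by omega⟩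
  obtain ⟨hα0, hα1⟩ := hα
  set c : ℤ → ℝ := fun i => q ((i : ℝ) / ((m + 2 : ℕ) : ℝ)) with hcdef
  have hNpos : (0 : ℝ) < ((m + 2 : ℕ) : ℝ) := by positivity
  -- second differences of c are nonnegative
  have key : ∀ j : ℤ, 0 ≤ j → j ≤ (m : ℤ) → 0 ≤ Dc (Dc c) j := by
    intro j h0 h1
    have hj0 : (0 : ℝ) ≤ (j : ℝ) := by exact_mod_cast h0
    have hjm : (j : ℝ) + 2 ≤ ((m + 2 : ℕ) : ℝ) := by
      have : (j : ℝ) ≤ (m : ℝ) := by exact_mod_cast h1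
      push_cast; linarith
    have hx : ((j : ℝ) / ((m + 2 : ℕ) : ℝ)) ∈ Set.Icc (0 : ℝ) 1 := by
      constructor
      · positivity
      · rw [div_le_one hNpos]; linarith
    have hy : (((j : ℝ) + 2) / ((m + 2 : ℕ) : ℝ)) ∈ Set.Icc (0 : ℝ) 1 := by
      constructor
      · positivity
      · rw [div_le_one hNpos]; linarith
    have h2 := hq.2 hx hy (by norm_num : (0:ℝ) ≤ 1/2) (by norm_num : (0:ℝ) ≤ 1/2) (by norm_num)
    simp only [smul_eq_mul] at h2
    have emid : (1/2 : ℝ) * ((j : ℝ) / ((m + 2 : ℕ) : ℝ))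
        + (1/2 : ℝ) * (((j : ℝ) + 2) / ((m + 2 : ℕ) : ℝ))
        = ((j : ℝ) + 1) / ((m + 2 : ℕ) : ℝ) := by field_simp; ring
    rw [emid] at h2
    have e0 : c j = q ((j : ℝ) / ((m + 2 : ℕ) : ℝ)) := rfl
    have e1 : c (j + 1) = q (((j : ℝ) + 1) / ((m + 2 : ℕ) : ℝ)) := by
      simp only [hcdef]; push_cast; ring_nf
    have e2 : c (j + 2) = q (((j : ℝ) + 2) / ((m + 2 : ℕ) : ℝ)) := by
      simp only [hcdef]; push_cast; ring_nf
    rw [Dc_Dc, e0, e1, e2]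
    linarith
  -- rewrite the operator in terms of S
  have hfun : (fun z : ℝ => ∑ i ∈ Finset.range (m + 2 + 1),
        F α (m + 2) (i : ℤ) z * q ((i : ℝ) / ((m + 2 : ℕ) : ℝ)))
      = fun z => α * S (m + 2) c z
          + (1 - α) * ((1 - z) * S m c z + z * S m (fun i => c (i + 2)) z) := by
    funext z
    have step1 : ∀ i ∈ Finset.range (m + 3),
        F α (m + 2) (i : ℤ) z * q ((i : ℝ) / ((m + 2 : ℕ) : ℝ))
          = α * (bb (m + 2) (i : ℤ) z * c i)
            + (((1 - α) * (1 - z)) * (bb m (i : ℤ) z * c i)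
            + ((1 - α) * z) * (bb m ((i : ℤ) - 2) z * c i)) := by
      intro i _
      have hqc : q ((i : ℝ) / ((m + 2 : ℕ) : ℝ)) = c (i : ℤ) := by
        simp only [hcdef, Int.cast_natCast]
      rw [F_eq, hqc]; ring
    rw [Finset.sum_congr rfl step1, Finset.sum_add_distrib, Finset.sum_add_distrib,
      ← Finset.mul_sum, ← Finset.mul_sum, ← Finset.mul_sum]
    have sB : ∑ i ∈ Finset.range (m + 3), bb m (i : ℤ) z * c i = S m c z := by
      rw [show m + 3 = (m + 1) + 1 + 1 from rfl, Finset.sum_range_succ, Finset.sum_range_succ,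
        bb_gt m ((m + 1 : ℕ) : ℤ) (by push_cast; omega) z,
        bb_gt m ((m + 1 + 1 : ℕ) : ℤ) (by push_cast; omega) z]
      simp [S]
    have sC : ∑ i ∈ Finset.range (m + 3), bb m ((i : ℤ) - 2) z * c i
        = S m (fun i => c (i + 2)) z := by
      rw [Finset.sum_range_succ', Finset.sum_range_succ']
      have z0 : bb m (((0 : ℕ) : ℤ) - 2) z = 0 := bb_neg m _ (by norm_num) z
      have z1 : bb m (((0 + 1 : ℕ) : ℤ) - 2) z = 0 := bb_neg m _ (by norm_num) z
      rw [z0, z1]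
      simp only [zero_mul, add_zero, S]
      refine Finset.sum_congr rfl fun i _ => ?_
      rw [show ((i + 1 + 1 : ℕ) : ℤ) - 2 = (i : ℤ) by push_cast; ring,
        show ((i + 1 + 1 : ℕ) : ℤ) = (i : ℤ) + 2 by push_cast; ring]
    rw [sB, sC, show (∑ i ∈ Finset.range (m + 3), bb (m + 2) (i : ℤ) z * c i)
      = S (m + 2) c z from rfl]
    ring
  rw [hfun]
  -- derivatives
  have hd1 : ∀ z : ℝ, HasDerivAt
      (fun z => α * S (m + 2) c z
        + (1 - α) * ((1 - z) * S m c z + z * S m (fun i => c (i + 2)) z))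
      (α * (((m + 2 : ℕ) : ℝ) * S (m + 1) (Dc c) z)
        + (1 - α) * ((-1 * S m c z + (1 - z) * ((m : ℝ) * S (m - 1) (Dc c) z))
          + (1 * S m (fun i => c (i + 2)) z
            + z * ((m : ℝ) * S (m - 1) (Dc fun i => c (i + 2)) z)))) z := by
    intro z
    exact ((hasDerivAt_S (m + 2) c z).const_mul α).add
      (((((hasDerivAt_id z).const_sub 1).mul (hasDerivAt_S m c z)).add
        ((hasDerivAt_id z).mul (hasDerivAt_S m (fun i => c (i + 2)) z))).const_mul (1 - α))
  have hd2 : ∀ z : ℝ, HasDerivAt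
      (fun z => α * (((m + 2 : ℕ) : ℝ) * S (m + 1) (Dc c) z)
        + (1 - α) * ((-1 * S m c z + (1 - z) * ((m : ℝ) * S (m - 1) (Dc c) z))
          + (1 * S m (fun i => c (i + 2)) z
            + z * ((m : ℝ) * S (m - 1) (Dc fun i => c (i + 2)) z))))
      (α * (((m + 2 : ℕ) : ℝ) * (((m + 1 : ℕ) : ℝ) * S m (Dc (Dc c)) z))
        + (1 - α) * (((-1 * ((m : ℝ) * S (m - 1) (Dc c) z))
            + (-1 * ((m : ℝ) * S (m - 1) (Dc c) z)
              + (1 - z) * ((m : ℝ) * (((m - 1 : ℕ) : ℝ) * S (m - 1 - 1) (Dc (Dc c)) z))))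
          + (1 * ((m : ℝ) * S (m - 1) (Dc fun i => c (i + 2)) z)
            + (1 * ((m : ℝ) * S (m - 1) (Dc fun i => c (i + 2)) z)
              + z * ((m : ℝ) * (((m - 1 : ℕ) : ℝ)
                * S (m - 1 - 1) (Dc (Dc fun i => c (i + 2))) z)))))) z := by
    intro z
    exact (((hasDerivAt_S (m + 1) (Dc c) z).const_mul ((m + 2 : ℕ) : ℝ)).const_mul α).add
      (((((hasDerivAt_S m c z).const_mul (-1)).add
          (((hasDerivAt_id z).const_sub 1).mul
            ((hasDerivAt_S (m - 1) (Dc c) z).const_mul (m : ℝ)))).add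
        (((hasDerivAt_S m (fun i => c (i + 2)) z).const_mul 1).add
          ((hasDerivAt_id z).mul
            ((hasDerivAt_S (m - 1) (Dc fun i => c (i + 2)) z).const_mul (m : ℝ))))).const_mul
        (1 - α))
  refine convexOn_of_hasDerivWithinAt2_nonneg (convex_Icc 0 1)
    (fun x _ => (hd1 x).continuousAt.continuousWithinAt)
    (fun x _ => (hd1 x).hasDerivWithinAt) (fun x _ => (hd2 x).hasDerivWithinAt) ?_
  intro x hx
  rw [interior_Icc] at hx
  obtain ⟨hx0, hx1⟩ := hx
  -- nonnegativity of the second derivative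
  have hS1 : 0 ≤ S m (Dc (Dc c)) x :=
    S_nonneg m _ x hx0.le hx1.le fun i hi => key i (by positivity) (by exact_mod_cast hi)
  have hS2 : 0 ≤ S (m - 1 - 1) (Dc (Dc c)) x :=
    S_nonneg _ _ x hx0.le hx1.le fun i hi =>
      key i (by positivity) (by exact_mod_cast le_trans hi (by omega))
  have hS3 : 0 ≤ (m : ℝ) * (((m - 1 : ℕ) : ℝ) * S (m - 1 - 1) (Dc (Dc fun i => c (i + 2))) x) := by
    rcases m with _ | _ | k
    · simp
    · simp
    · refine mul_nonneg (by positivity) (mul_nonneg (by positivity) ?_)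
      refine S_nonneg _ _ x hx0.le hx1.le fun i hi => ?_
      rw [Dc_Dc_shift]
      refine key ((i : ℤ) + 2) (by positivity) ?_
      have hik : i ≤ k := by omega
      push_cast
      omega
  have hS4 : 0 ≤ (m : ℝ) * (S (m - 1) (Dc fun i => c (i + 2)) x - S (m - 1) (Dc c) x) := by
    rcases m with _ | k
    · simp
    · refine mul_nonneg (by positivity) ?_
      rw [S_sub]
      refine Finset.sum_nonneg fun i hi => mul_nonneg (bb_nonneg _ _ _ hx0.le hx1.le) ?_
      rw [Dc_sub]
      have hik : i ≤ k := by
        simp only [Finset.mem_range] at hi; omega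
      have h1 := key (i : ℤ) (by positivity) (by push_cast; omega)
      have h2 := key ((i : ℤ) + 1) (by positivity) (by push_cast; omega)
      linarith
  rw [show (α * (((m + 2 : ℕ) : ℝ) * (((m + 1 : ℕ) : ℝ) * S m (Dc (Dc c)) x))
        + (1 - α) * (((-1 * ((m : ℝ) * S (m - 1) (Dc c) x))
            + (-1 * ((m : ℝ) * S (m - 1) (Dc c) x)
              + (1 - x) * ((m : ℝ) * (((m - 1 : ℕ) : ℝ) * S (m - 1 - 1) (Dc (Dc c)) x))))
          + (1 * ((m : ℝ) * S (m - 1) (Dc fun i => c (i + 2)) x)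
            + (1 * ((m : ℝ) * S (m - 1) (Dc fun i => c (i + 2)) x)
              + x * ((m : ℝ) * (((m - 1 : ℕ) : ℝ)
                * S (m - 1 - 1) (Dc (Dc fun i => c (i + 2))) x))))))
      = α * (((m + 2 : ℕ) : ℝ) * (((m + 1 : ℕ) : ℝ) * S m (Dc (Dc c)) x))
        + (1 - α) * ((1 - x) * ((m : ℝ) * (((m - 1 : ℕ) : ℝ) * S (m - 1 - 1) (Dc (Dc c)) x))
          + (x * ((m : ℝ) * (((m - 1 : ℕ) : ℝ) * S (m - 1 - 1) (Dc (Dc fun i => c (i + 2))) x))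
            + 2 * ((m : ℝ) * (S (m - 1) (Dc fun i => c (i + 2)) x - S (m - 1) (Dc c) x))))
      by ring]
  refine add_nonneg (mul_nonneg hα0 (mul_nonneg (Nat.cast_nonneg _)
      (mul_nonneg (Nat.cast_nonneg _) hS1))) (mul_nonneg (by linarith) ?_)
  refine add_nonneg (mul_nonneg (by linarith) (mul_nonneg (Nat.cast_nonneg _)
      (mul_nonneg (Nat.cast_nonneg _) hS2))) ?_
  exact add_nonneg (mul_nonneg hx0.le hS3) (mul_nonneg (by norm_num) hS4)
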